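/- The inverse Gaussian density f(x; a, b) = (2π)^{-1/2} a x^{-3/2} exp(ab - (1/2)(a² x^{-1} + b² x)) for x > 0 integrates to 1, i.e., it is a probability density on (0, ∞), for any a > 0 and b > 0. -/

import Mathlib

open MeasureTheory Real Set

/-- The inverse Gaussian density IG(a, b). -/
noncomputable def igPdf (a b x : ℝ) : ℝ :=
  (2 * π) ^ (-(1:ℝ)/2) * a * x ^ (-(3:ℝ)/2) *
    Real.exp (a * b - (1/2) * (a^2 * x⁻¹ + b^2 * x))

/-! Substituting `x = t ^ 2` turns the density into
`2 (2π)^(-1/2) (a / t²) exp (-(b t - a / t)² / 2)`. The map `ψ t = b t - a / t` is an increasing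
bijection of `(0, ∞)` onto `ℝ` with `ψ' t = b + a / t²`, so `∫₀^∞ (b + a / t²) h (ψ t) dt = ∫ h`
(Cauchy–Schlömilch). For even `h` the inversion `t ↦ a / (b t)` exchanges the two parts `b` and
`a / t²` of the weight, so each of them carries half of the Gaussian integral `√(2π)`. -/

section ChangeOfVariables

variable {E : Type*} [NormedAddCommGroup E] [NormedSpace ℝ E] {a b c : ℝ}

theorem integral_comp_sq_Ioi (g : ℝ → E) :
    ∫ t in Ioi 0, (2 * t) • g (t ^ 2) = ∫ x in Ioi 0, g x := by
  refine (setIntegral_congr_fun measurableSet_Ioi fun t _ => ?_).trans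
    (integral_comp_rpow_Ioi_of_pos two_pos)
  norm_num [rpow_two]

theorem image_div_Ioi (hc : 0 < c) : (fun t => c / t) '' Ioi 0 = Ioi 0 := by
  ext x
  constructor
  · rintro ⟨t, ht, rfl⟩
    exact div_pos hc ht
  · intro hx
    exact ⟨c / x, div_pos hc hx, div_div_cancel₀ hc.ne'⟩

theorem integral_comp_div_Ioi (hc : 0 < c) (g : ℝ → E) :
    ∫ t in Ioi 0, (c / t ^ 2) • g (c / t) = ∫ t in Ioi 0, g t := by
  conv_rhs => rw [← image_div_Ioi hc]
  have hderiv : ∀ t ∈ Ioi (0 : ℝ), HasDerivWithinAt (fun t => c / t) (-(c / t ^ 2)) (Ioi 0) t :=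
    fun t ht => by
      simpa [div_eq_mul_inv] using ((hasDerivAt_inv (ne_of_gt ht)).const_mul c).hasDerivWithinAt
  have hinj : InjOn (fun t => c / t) (Ioi 0) := fun s _ t _ hst =>
    inv_injective (mul_left_cancel₀ hc.ne' (by simpa [div_eq_mul_inv] using hst))
  rw [integral_image_eq_integral_abs_deriv_smul measurableSet_Ioi hderiv hinj]
  refine setIntegral_congr_fun measurableSet_Ioi fun t ht => ?_
  rw [abs_neg, abs_of_pos (div_pos hc (pow_pos ht 2))]

theorem hasDerivAt_mul_sub_div {t : ℝ} (ht : t ≠ 0) :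
    HasDerivAt (fun t => b * t - a / t) (b + a / t ^ 2) t := by
  have h : HasDerivAt (fun t => b * t - a * t⁻¹) (b * 1 - a * -(t ^ 2)⁻¹) t :=
    ((hasDerivAt_id' t).const_mul b).sub ((hasDerivAt_inv ht).const_mul a)
  simpa [div_eq_mul_inv] using h

theorem strictMonoOn_mul_sub_div (ha : 0 ≤ a) (hb : 0 < b) :
    StrictMonoOn (fun t => b * t - a / t) (Ioi 0) := fun s hs t ht hst => by
  have : a / t ≤ a / s := div_le_div_of_nonneg_left ha hs hst.le
  have : b * s < b * t := mul_lt_mul_of_pos_left hst hb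
  dsimp only
  linarith

theorem image_mul_sub_div_Ioi (ha : 0 < a) (hb : 0 < b) :
    (fun t => b * t - a / t) '' Ioi 0 = univ := by
  refine eq_univ_of_forall fun u => ?_
  -- the positive root of `b t ^ 2 - u t - a`
  set s := √(u ^ 2 + 4 * a * b)
  have hs_sq : s ^ 2 = u ^ 2 + 4 * a * b := sq_sqrt (by positivity)
  have hu : |u| < s := by
    rw [← sqrt_sq_eq_abs]
    exact sqrt_lt_sqrt (sq_nonneg u) (by nlinarith [mul_pos ha hb])
  have ht : 0 < (u + s) / (2 * b) := div_pos (by linarith [(abs_lt.1 hu).1]) (by positivity)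
  refine ⟨(u + s) / (2 * b), ht, ?_⟩
  have : a / ((u + s) / (2 * b)) = b * ((u + s) / (2 * b)) - u := by
    rw [div_eq_iff ht.ne']
    field_simp
    linear_combination -hs_sq
  dsimp only
  linarith

theorem integral_comp_mul_sub_div (ha : 0 < a) (hb : 0 < b) (h : ℝ → E) :
    ∫ t in Ioi 0, (b + a / t ^ 2) • h (b * t - a / t) = ∫ u, h u := by
  conv_rhs => rw [← setIntegral_univ, ← image_mul_sub_div_Ioi ha hb]
  rw [integral_image_eq_integral_abs_deriv_smul measurableSet_Ioi
      (fun t ht => (hasDerivAt_mul_sub_div (ne_of_gt ht)).hasDerivWithinAt)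
      (strictMonoOn_mul_sub_div ha.le hb).injOn]
  refine setIntegral_congr_fun measurableSet_Ioi fun t _ => ?_
  rw [abs_of_pos (by positivity)]

theorem integrableOn_comp_mul_sub_div_iff (ha : 0 < a) (hb : 0 < b) (h : ℝ → E) :
    IntegrableOn (fun t => (b + a / t ^ 2) • h (b * t - a / t)) (Ioi 0) ↔ Integrable h := by
  rw [← integrableOn_univ, ← image_mul_sub_div_Ioi ha hb,
    integrableOn_image_iff_integrableOn_abs_deriv_smul measurableSet_Ioi
      (fun t ht => (hasDerivAt_mul_sub_div (ne_of_gt ht)).hasDerivWithinAt)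
      (strictMonoOn_mul_sub_div ha.le hb).injOn]
  refine integrableOn_congr_fun (fun t _ => ?_) measurableSet_Ioi
  rw [abs_of_pos (by positivity)]

theorem integral_div_sq_smul_comp_mul_sub_div_eq_integral_smul (ha : 0 < a) (hb : 0 < b)
    {h : ℝ → E} (heven : h.Even) :
    ∫ t in Ioi 0, (a / t ^ 2) • h (b * t - a / t) = ∫ t in Ioi 0, b • h (b * t - a / t) := by
  -- `t ↦ a / (b t)` preserves `Ioi 0` and turns `b t - a / t` into its negative
  rw [← integral_comp_div_Ioi (div_pos ha hb) fun t => b • h (b * t - a / t)]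
  refine setIntegral_congr_fun measurableSet_Ioi fun t ht => ?_
  have ht : t ≠ 0 := ne_of_gt ht
  have harg : b * (a / b / t) - a / (a / b / t) = -(b * t - a / t) := by
    field_simp
    ring
  rw [harg, heven, smul_smul]
  congr 1
  field_simp

theorem integral_div_sq_smul_comp_mul_sub_div (ha : 0 < a) (hb : 0 < b)
    {h : ℝ → E} (heven : h.Even) (hint : Integrable h) :
    ∫ t in Ioi 0, (a / t ^ 2) • h (b * t - a / t) = (2 : ℝ)⁻¹ • ∫ u, h u := by
  set k := fun t => (b + a / t ^ 2) • h (b * t - a / t)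
  have hk : IntegrableOn k (Ioi 0) := (integrableOn_comp_mul_sub_div_iff ha hb h).2 hint
  have hweight :
      ∀ t ∈ Ioi (0 : ℝ), (a / (b * t ^ 2 + a)) • k t = (a / t ^ 2) • h (b * t - a / t) :=
    fun t ht => by
      have : t ≠ 0 := ne_of_gt ht
      rw [smul_smul]
      congr 1
      field_simp
  have hA : IntegrableOn (fun t => (a / t ^ 2) • h (b * t - a / t)) (Ioi 0) := by
    have hbdd : ∀ᵐ t ∂volume.restrict (Ioi 0), ‖a / (b * t ^ 2 + a)‖ ≤ 1 :=
      Filter.Eventually.of_forall fun t => by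
        rw [norm_div, Real.norm_of_nonneg ha.le, Real.norm_of_nonneg (by positivity),
          div_le_one (by positivity)]
        exact le_add_of_nonneg_left (by positivity)
    have hmeas : Measurable fun t : ℝ => a / (b * t ^ 2 + a) := by fun_prop
    have : IntegrableOn (fun t => (a / (b * t ^ 2 + a)) • k t) (Ioi 0) :=
      hk.bdd_smul 1 hmeas.aestronglyMeasurable hbdd
    exact this.congr_fun hweight measurableSet_Ioi
  have hB : IntegrableOn (fun t => b • h (b * t - a / t)) (Ioi 0) :=
    (hk.sub hA).congr_fun (fun t _ => by simp [k, add_smul]) measurableSet_Ioi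
  have hsum : ∫ u, h u = (∫ t in Ioi 0, b • h (b * t - a / t)) +
      ∫ t in Ioi 0, (a / t ^ 2) • h (b * t - a / t) := by
    rw [← integral_comp_mul_sub_div ha hb h, ← integral_add hB hA]
    simp only [add_smul]
  rw [hsum, integral_div_sq_smul_comp_mul_sub_div_eq_integral_smul ha hb heven, ← two_smul ℝ,
    smul_smul, inv_mul_cancel₀ two_ne_zero, one_smul]

end ChangeOfVariables

theorem two_mul_mul_igPdf_sq (a b : ℝ) {t : ℝ} (ht : 0 < t) :
    (2 * t) * igPdf a b (t ^ 2) =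
      (2 * (2 * π) ^ (-(1 : ℝ) / 2)) * ((a / t ^ 2) * exp (-(1 / 2) * (b * t - a / t) ^ 2)) := by
  have hpow : (t ^ 2) ^ (-(3 : ℝ) / 2) = (t ^ 3)⁻¹ := by
    rw [← rpow_natCast, ← rpow_mul ht.le, ← rpow_natCast, ← rpow_neg ht.le]
    norm_num
  have hexp : a * b - 1 / 2 * (a ^ 2 * (t ^ 2)⁻¹ + b ^ 2 * t ^ 2) =
      -(1 / 2) * (b * t - a / t) ^ 2 := by
    field_simp
    ring
  rw [igPdf, hpow, hexp]
  field_simp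

theorem igPdf_integral_eq_one (a b : ℝ) (ha : 0 < a) (hb : 0 < b) :
    ∫ x in Ioi (0:ℝ), igPdf a b x = 1 := by
  have heven : (fun u : ℝ => exp (-(1 / 2) * u ^ 2)).Even := fun u => by simp
  calc ∫ x in Ioi (0:ℝ), igPdf a b x
      = ∫ t in Ioi 0, (2 * t) * igPdf a b (t ^ 2) := (integral_comp_sq_Ioi _).symm
    _ = ∫ t in Ioi 0, (2 * (2 * π) ^ (-(1 : ℝ) / 2)) *
          ((a / t ^ 2) * exp (-(1 / 2) * (b * t - a / t) ^ 2)) :=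
        setIntegral_congr_fun measurableSet_Ioi fun t ht => two_mul_mul_igPdf_sq a b ht
    _ = (2 * (2 * π) ^ (-(1 : ℝ) / 2)) * (2⁻¹ * ∫ u, exp (-(1 / 2) * u ^ 2)) := by
        rw [integral_const_mul]
        congr 1
        exact integral_div_sq_smul_comp_mul_sub_div ha hb heven
          (integrable_exp_neg_mul_sq one_half_pos)
    _ = (2 * π) ^ (-(1 : ℝ) / 2) * (2 * π) ^ (1 / 2 : ℝ) := by
        rw [integral_gaussian, div_div_eq_mul_div, div_one, mul_comm π, sqrt_eq_rpow]
        ring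
    _ = 1 := by
        rw [← rpow_add (by positivity)]
        norm_num
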